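/- For fixed B_x = 4 and B_y = 3, the XOR distance D = X̄ ⊗ Ȳ and the inner product satisfy ⟨X,Y⟩ = (105N - 2D)/128; in particular D is an affine decreasing function of the inner product: D = (105N - 128⟨X,Y⟩)/2. -/

import Mathlib

/-! With `σ t = (1 - t) / 2`, the XOR `u + v - 2uv` of `σ a` and `σ c` is `(1 - a c) / 2` for all reals
`a, c`. Summing against the weights `2 ^ (i + j)` splits the XOR distance into
`(∑ 2 ^ i) (∑ 2 ^ j) / 2 = (2 ^ 4 - 1) (2 ^ 3 - 1) / 2 = 105 / 2` minus half the product of the two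
signed-digit expansions, which is `2 ^ 7 / 2 = 64` times `x_k y_k`. -/

open Finset

lemma sigma_xor_sigma (a c : ℝ) :
    (1 - a) / 2 + (1 - c) / 2 - 2 * ((1 - a) / 2) * ((1 - c) / 2) = (1 - a * c) / 2 := by
  ring

lemma sum_range_two_pow (n : ℕ) : ∑ i ∈ range n, (2 : ℝ) ^ i = 2 ^ n - 1 := by
  have h := geom_sum_mul (2 : ℝ) n
  norm_num at h
  exact h

lemma sum_sum_one_sub_mul_mul_two_pow (m n : ℕ) (a c : ℕ → ℝ) :
    ∑ i ∈ range m, ∑ j ∈ range n, (1 - a i * c j) / 2 * 2 ^ (i + j) =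
      ((2 ^ m - 1) * (2 ^ n - 1) -
        (∑ i ∈ range m, a i * 2 ^ i) * ∑ j ∈ range n, c j * 2 ^ j) / 2 := by
  have hsplit : ∀ i j, (1 - a i * c j) / 2 * (2 : ℝ) ^ (i + j) =
      (2 ^ i * 2 ^ j - a i * 2 ^ i * (c j * 2 ^ j)) / 2 := fun i j => by ring
  simp only [hsplit, ← sum_div, sum_sub_distrib, ← sum_mul_sum, sum_range_two_pow]

theorem stmt_15_general (N : ℕ)
    (a c : ℕ → ℕ → ℝ)
    (x y : ℕ → ℝ)
    (hx : ∀ k < N, x k = (∑ i ∈ Finset.range 4, a i k * 2 ^ i) / 2 ^ 4)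
    (hy : ∀ k < N, y k = (∑ j ∈ Finset.range 3, c j k * 2 ^ j) / 2 ^ 3)
    (σ : ℝ → ℝ) (hσ : ∀ t, σ t = (1 - t) / 2)
    (xor : ℝ → ℝ → ℝ) (hxor : ∀ u v, xor u v = u + v - 2 * u * v)
    (D : ℝ)
    (hD : D = ∑ k ∈ Finset.range N, ∑ i ∈ Finset.range 4,
      ∑ j ∈ Finset.range 3, xor (σ (a i k)) (σ (c j k)) * 2 ^ (i + j)) :
    ∑ k ∈ Finset.range N, x k * y k = (105 * N - 2 * D) / 128 ∧
    D = (105 * N - 128 * ∑ k ∈ Finset.range N, x k * y k) / 2 := by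
  have hcoord : ∀ k ∈ range N, ∑ i ∈ range 4, ∑ j ∈ range 3,
      xor (σ (a i k)) (σ (c j k)) * 2 ^ (i + j) = (105 - 128 * (x k * y k)) / 2 := by
    intro k hk
    have hk : k < N := mem_range.mp hk
    simp only [hxor, hσ, sigma_xor_sigma, sum_sum_one_sub_mul_mul_two_pow, hx k hk, hy k hk]
    ring
  have hDxy : D = (105 * N - 128 * ∑ k ∈ range N, x k * y k) / 2 := by
    rw [hD, sum_congr rfl hcoord, ← sum_div, sum_sub_distrib, ← mul_sum, sum_const, card_range,
      nsmul_eq_mul]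
    ring
  exact ⟨by rw [hDxy]; ring, hDxy⟩

/-- For B_x = 4, B_y = 3: with D = X̄ ⊗ Ȳ the XOR distance,
⟨X,Y⟩ = (105N - 2D)/128, and D = (105N - 128⟨X,Y⟩)/2. -/
theorem stmt_15 (N : ℕ)
    (a c : ℕ → ℕ → ℝ)
    (ha : ∀ i < 4, ∀ k < N, a i k = 1 ∨ a i k = -1)
    (hc : ∀ j < 3, ∀ k < N, c j k = 1 ∨ c j k = -1)
    (x y : ℕ → ℝ)
    (hx : ∀ k < N, x k = (∑ i ∈ Finset.range 4, a i k * 2 ^ i) / 2 ^ 4)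
    (hy : ∀ k < N, y k = (∑ j ∈ Finset.range 3, c j k * 2 ^ j) / 2 ^ 3)
    (σ : ℝ → ℝ) (hσ : ∀ t, σ t = (1 - t) / 2)
    (xor : ℝ → ℝ → ℝ) (hxor : ∀ u v, xor u v = u + v - 2 * u * v)
    (D : ℝ)
    (hD : D = ∑ k ∈ Finset.range N, ∑ i ∈ Finset.range 4,
      ∑ j ∈ Finset.range 3, xor (σ (a i k)) (σ (c j k)) * 2 ^ (i + j)) :
    ∑ k ∈ Finset.range N, x k * y k = (105 * N - 2 * D) / 128 ∧
    D = (105 * N - 128 * ∑ k ∈ Finset.range N, x k * y k) / 2 :=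
  stmt_15_general N a c x y hx hy σ hσ xor hxor D hD
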